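/- arXiv:1008.2914 — 2 statements merged into one kernel-verified Lean document; each statement's English description precedes it below -/
import Mathlib

section
/- Let T be a bounded invertible operator with spectrum in ℂ \ {Re z ≤ 0}, and let B be a bounded operator satisfying B T = T⁻¹ B. Then B (Log T) = −(Log T) B, where Log T is defined by the holomorphic functional calculus with the principal branch of the logarithm. -/
/-!
Since `B (z - T)⁻¹ = (z - T⁻¹)⁻¹ B` off both spectra, `B · Log T = Log (T⁻¹) · B`, and it remains
to show `Log (T⁻¹) = -Log T`. Both the change of contour between non-concentric circles and this
identity come from one formula: by the Cauchy representation of the resolvent over `∂D` and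
Fubini, `∮_Γ ψ(z) (ζ(z) - T)⁻¹ dz = (2πi)⁻¹ ∮_{∂D} (∮_Γ ψ(z) (ζ(z) - w)⁻¹ dz) (w - T)⁻¹ dw`
whenever `ζ` maps `Γ` outside `D ⊇ σ(T)`.

Move the contour of `Log (T⁻¹)` to a circle `Γ` in the right half-plane whose disc contains `D`
and `D⁻¹`. On `Γ`, `(z - T⁻¹)⁻¹ = z⁻¹ - z⁻² (z⁻¹ - T)⁻¹`. The first term integrates against
`log` to `0`; for the second one take `ψ(z) = z⁻² log z` and `ζ(z) = z⁻¹`: Cauchy's formula at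
`w⁻¹`, inside `Γ`, gives `∮_Γ z⁻² log z (z⁻¹ - w)⁻¹ dz = -2πi log (w⁻¹) = 2πi log w`.
-/

open Metric Set Complex Filter Topology MeasureTheory
open scoped Real

section CircleIntegral

variable {E : Type*} [NormedAddCommGroup E] [NormedSpace ℂ E] {c : ℂ} {R : ℝ}

theorem ContinuousLinearMap.circleIntegral_comp_comm {F : Type*} [NormedAddCommGroup F]
    [NormedSpace ℂ F] [CompleteSpace E] [CompleteSpace F] (L : E →L[ℂ] F) {f : ℂ → E}
    (hf : CircleIntegrable f c R) :
    (∮ z in C(c, R), L (f z)) = L (∮ z in C(c, R), f z) := by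
  simp only [circleIntegral, ← L.intervalIntegral_comp_comm hf.out, L.map_smul]

theorem CircleIntegrable.integral_const_mul {A : Type*} [NormedRing A] [NormedAlgebra ℂ A]
    [CompleteSpace A] {f : ℂ → A} (hf : CircleIntegrable f c R) (b : A) :
    (∮ z in C(c, R), b * f z) = b * ∮ z in C(c, R), f z :=
  (ContinuousLinearMap.mul ℂ A b).circleIntegral_comp_comm hf

theorem CircleIntegrable.integral_mul_const {A : Type*} [NormedRing A] [NormedAlgebra ℂ A]
    [CompleteSpace A] {f : ℂ → A} (hf : CircleIntegrable f c R) (b : A) :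
    (∮ z in C(c, R), f z * b) = (∮ z in C(c, R), f z) * b :=
  ((ContinuousLinearMap.mul ℂ A).flip b).circleIntegral_comp_comm hf

theorem circleIntegral_circleIntegral_swap [CompleteSpace E] {c₁ c₂ : ℂ} {r₁ r₂ : ℝ}
    (h₁ : 0 ≤ r₁) (h₂ : 0 ≤ r₂) {f : ℂ → ℂ → E}
    (hf : ContinuousOn (fun p : ℂ × ℂ => f p.1 p.2) (sphere c₁ r₁ ×ˢ sphere c₂ r₂)) :
    (∮ z in C(c₁, r₁), ∮ w in C(c₂, r₂), f z w) = ∮ w in C(c₂, r₂), ∮ z in C(c₁, r₁), f z w := by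
  set g : ℝ → ℝ → E := fun θ φ =>
    (deriv (circleMap c₁ r₁) θ * deriv (circleMap c₂ r₂) φ) •
      f (circleMap c₁ r₁ θ) (circleMap c₂ r₂ φ)
  have hg : Continuous (Function.uncurry g) := by
    refine Continuous.smul (by simp only [deriv_circleMap]; fun_prop) ?_
    exact hf.comp_continuous (f := fun p : ℝ × ℝ => (circleMap c₁ r₁ p.1, circleMap c₂ r₂ p.2))
      (by fun_prop) fun p => ⟨circleMap_mem_sphere _ h₁ _, circleMap_mem_sphere _ h₂ _⟩
  have hint : Integrable (Function.uncurry g)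
      ((volume.restrict (Ioc 0 (2 * π))).prod (volume.restrict (Ioc 0 (2 * π)))) := by
    rw [Measure.prod_restrict]
    exact (hg.continuousOn.integrableOn_compact (isCompact_Icc.prod isCompact_Icc)).mono_set
      (prod_mono Ioc_subset_Icc_self Ioc_subset_Icc_self)
  calc (∮ z in C(c₁, r₁), ∮ w in C(c₂, r₂), f z w)
      = ∫ θ in 0..2 * π, ∫ φ in 0..2 * π, g θ φ := by
        simp only [circleIntegral, g, ← intervalIntegral.integral_smul, smul_smul]
    _ = ∫ φ in 0..2 * π, ∫ θ in 0..2 * π, g θ φ := by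
        simp only [intervalIntegral.integral_of_le Real.two_pi_pos.le]
        exact integral_integral_swap hint
    _ = ∮ w in C(c₂, r₂), ∮ z in C(c₁, r₁), f z w := by
        simp only [circleIntegral, g, ← intervalIntegral.integral_smul, smul_smul, mul_comm]

end CircleIntegral

theorem differentiableOn_log_of_re_pos {U : Set ℂ} (hU : U ⊆ {z | 0 < z.re}) :
    DifferentiableOn ℂ log U :=
  fun _ hz => (differentiableAt_log (Or.inl (hU hz))).differentiableWithinAt

theorem differentiableOn_log_mul_inv_of_re_pos {U : Set ℂ} (hU : U ⊆ {z | 0 < z.re}) :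
    DifferentiableOn ℂ (fun z => log z * z⁻¹) U :=
  (differentiableOn_log_of_re_pos hU).mul
    (differentiableOn_inv.mono fun _ hz => ne_zero_of_re_pos (hU hz))

theorem circleIntegral_log_mul_inv {c : ℂ} {R : ℝ} (hR : 0 ≤ R)
    (hU : closedBall c R ⊆ {z | 0 < z.re}) :
    (∮ z in C(c, R), log z * z⁻¹) = 0 :=
  ((differentiableOn_log_mul_inv_of_re_pos hU).mono closure_ball_subset_closedBall).diffContOnCl
    |>.circleIntegral_eq_zero hR

theorem circleIntegral_log_mul_inv_sq_mul_inv_sub {c w : ℂ} {R : ℝ}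
    (hU : closedBall c R ⊆ {z | 0 < z.re}) (hw : w⁻¹ ∈ ball c R) :
    (∮ z in C(c, R), log z * (z ^ 2)⁻¹ * (z⁻¹ - w)⁻¹) = 2 * π * I * log w := by
  have hw' : w⁻¹ ∈ closedBall c R := ball_subset_closedBall hw
  have hw0 : w ≠ 0 := by
    rintro rfl
    exact ne_zero_of_re_pos (hU hw') inv_zero
  have hlog : log w⁻¹ = -log w := by
    have h := log_inv w⁻¹ (slitPlane_arg_ne_pi (Or.inl (hU hw')))
    rw [inv_inv] at h
    rw [h, neg_neg]
  have hpt : EqOn (fun z => log z * (z ^ 2)⁻¹ * (z⁻¹ - w)⁻¹)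
      (fun z => -w⁻¹ * ((z - w⁻¹)⁻¹ • (log z * z⁻¹))) (sphere c R) := by
    intro z hz
    have hz0 : z ≠ 0 := ne_zero_of_re_pos (hU (sphere_subset_closedBall hz))
    simp only [smul_eq_mul]
    field_simp
    rw [← neg_sub 1 (z * w), div_neg, neg_neg]
  rw [circleIntegral.integral_congr (dist_nonneg.trans (mem_ball.mp hw).le) hpt,
    circleIntegral.integral_const_mul,
    (differentiableOn_log_mul_inv_of_re_pos hU).circleIntegral_sub_inv_smul hw, smul_eq_mul, hlog]
  field_simp

theorem exists_ball_superset_of_isCompact_of_re_pos {K : Set ℂ} (hK : IsCompact K)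
    (hre : ∀ z ∈ K, 0 < z.re) :
    ∃ (a : ℂ) (ρ : ℝ), K ⊆ ball a ρ ∧ closedBall a ρ ⊆ {z | 0 < z.re} := by
  obtain ⟨s, hs, hsK⟩ := hK.exists_forall_le' continuous_re.continuousOn hre
  obtain ⟨m, hm⟩ := hK.isBounded.exists_norm_le
  -- `s ≤ re z` and `‖z‖ ≤ m` on `K`; the disc of radius `x - s / 2` about `x` contains `K`
  -- as soon as `x s > m ^ 2`
  set x := m ^ 2 / s + s with hx
  have hxs : x * s = m ^ 2 + s ^ 2 := by rw [hx]; field_simp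
  have hxs' : s ≤ x := by rw [hx]; linarith [div_nonneg (sq_nonneg m) hs.le]
  refine ⟨x, x - s / 2, fun z hz => ?_, fun z hz => ?_⟩
  · have hnorm : ‖z‖ ^ 2 ≤ m ^ 2 := pow_le_pow_left₀ (norm_nonneg z) (hm z hz) 2
    have hre : 2 * x * s ≤ 2 * x * z.re := by gcongr; exact hsK z hz
    rw [mem_ball, dist_eq_norm]
    apply lt_of_pow_lt_pow_left₀ 2 (by linarith)
    rw [← normSq_eq_norm_sq, normSq_apply] at hnorm ⊢
    simp only [sub_re, sub_im, ofReal_re, ofReal_im, sub_zero]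
    nlinarith
  · have h := abs_re_le_norm (z - x)
    rw [mem_closedBall, dist_eq_norm] at hz
    simp only [sub_re, ofReal_re] at h
    show 0 < z.re
    linarith [neg_abs_le (z.re - x)]

namespace spectrum

section Algebraic

variable {R A : Type*} [CommRing R] [Ring A] [Algebra R A] {a : A} {z : R}

theorem mul_resolvent_self (hz : z ∈ resolventSet R a) :
    a * resolvent a z = z • resolvent a z - 1 := by
  have h := Ring.mul_inverse_cancel _ hz
  rw [← resolvent, sub_mul, Algebra.algebraMap_eq_smul_one, smul_one_mul] at h
  rw [← h, sub_sub_cancel]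

theorem resolvent_mul_self (hz : z ∈ resolventSet R a) :
    resolvent a z * a = z • resolvent a z - 1 := by
  have h := Ring.inverse_mul_cancel _ hz
  rw [← resolvent, mul_sub, Algebra.algebraMap_eq_smul_one, mul_smul_one] at h
  rw [← h, sub_sub_cancel]

theorem resolvent_sub_resolvent_eq_smul_mul {w : R} (hz : z ∈ resolventSet R a)
    (hw : w ∈ resolventSet R a) :
    resolvent a z - resolvent a w = (w - z) • (resolvent a z * resolvent a w) := by
  calc resolvent a z - resolvent a w
      = resolvent a z * ((algebraMap R A w - a) - (algebraMap R A z - a)) * resolvent a w := by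
        rw [mul_sub, sub_mul, mul_assoc, resolvent, resolvent, Ring.mul_inverse_cancel _ hw,
          mul_one, Ring.inverse_mul_cancel _ hz, one_mul]
    _ = (w - z) • (resolvent a z * resolvent a w) := by
        rw [sub_sub_sub_cancel_right, ← map_sub, ← Algebra.commutes, Algebra.smul_def, mul_assoc]

theorem mul_resolvent_eq_resolvent_mul {a' b : A} (h : b * a = a' * b)
    (hz : z ∈ resolventSet R a) (hz' : z ∈ resolventSet R a') :
    b * resolvent a z = resolvent a' z * b := by
  have key : (algebraMap R A z - a') * b = b * (algebraMap R A z - a) := by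
    rw [sub_mul, mul_sub, h, Algebra.commutes]
  calc b * resolvent a z
      = resolvent a' z * ((algebraMap R A z - a') * (b * resolvent a z)) :=
        (Ring.inverse_mul_cancel_left _ _ hz').symm
    _ = resolvent a' z * (b * ((algebraMap R A z - a) * resolvent a z)) := by
        rw [← mul_assoc (_ - a'), key, mul_assoc]
    _ = resolvent a' z * b := by rw [resolvent, resolvent, Ring.mul_inverse_cancel _ hz, mul_one]

end Algebraic

theorem resolvent_eq_of_mul_eq_one {𝕜 A : Type*} [Field 𝕜] [Ring A] [Algebra 𝕜 A] {a b : A}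
    (hab : a * b = 1) (hba : b * a = 1) {z : 𝕜} (hz : z ≠ 0) (hz' : z⁻¹ ∈ resolventSet 𝕜 a) :
    resolvent b z = z⁻¹ • 1 - (z ^ 2)⁻¹ • resolvent a z⁻¹ := by
  have hfac : algebraMap 𝕜 A z - b = (-z • b) * (algebraMap 𝕜 A z⁻¹ - a) := by
    rw [Algebra.algebraMap_eq_smul_one, Algebra.algebraMap_eq_smul_one, mul_sub, smul_mul_assoc,
      smul_mul_assoc, mul_smul_one, hba, smul_smul, neg_mul, mul_inv_cancel₀ hz]
    module
  have hcomm : Commute (-z • b) (algebraMap 𝕜 A z⁻¹ - a) :=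
    (((Algebra.commute_algebraMap_left z⁻¹ b).symm.sub_right
      (hba.trans hab.symm)).smul_left (-z))
  have hinv : Ring.inverse (-z • b) = -z⁻¹ • a := by
    refine Ring.inverse_unit ⟨-z • b, -z⁻¹ • a, ?_, ?_⟩ <;>
      rw [smul_mul_smul, neg_mul_neg] <;> simp [hz, hab, hba]
  rw [resolvent, hfac, Ring.mul_inverse_rev' hcomm, hinv, ← resolvent, mul_smul_comm,
    resolvent_mul_self hz']
  module

theorem sphere_subset_resolventSet {𝕜 A : Type*} [NormedField 𝕜] [Ring A] [Algebra 𝕜 A] {a : A}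
    {c : 𝕜} {r : ℝ} (hs : spectrum 𝕜 a ⊆ ball c r) : sphere c r ⊆ resolventSet 𝕜 a :=
  fun _ hz => compl_subset_comm.mp hs (sphere_disjoint_ball.notMem_of_mem_left hz)

section Banach

variable {A : Type*} [NormedRing A] [NormedAlgebra ℂ A] [CompleteSpace A] {a : A} {c : ℂ} {r : ℝ}

theorem differentiableOn_resolvent (a : A) :
    DifferentiableOn ℂ (resolvent a) (resolventSet ℂ a) :=
  fun _ hz => (hasDerivAt_resolvent_const_left hz).differentiableAt.differentiableWithinAt

theorem circleIntegral_resolvent (hr : 0 < r) (hs : spectrum ℂ a ⊆ ball c r) :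
    (∮ z in C(c, r), resolvent a z) = (2 * π * I : ℂ) • 1 := by
  have hρ : (ball c r)ᶜ ⊆ resolventSet ℂ a := compl_subset_comm.mp hs
  have hcont := (differentiableOn_resolvent a).continuousOn
  -- `R(z) - (z - c)⁻¹ = (z - c)⁻¹ (a - c) R(z)` is `O(‖R(z)‖ / R)` on the circle of radius `R`,
  -- `R(z) → 0` at infinity, and the integral does not depend on `R ≥ r`
  refine eq_of_forall_dist_le fun ε hε => ?_
  set K := ‖a - algebraMap ℂ A c‖
  obtain ⟨R₀, -, hR₀⟩ := (hasBasis_cobounded_compl_closedBall c).eventually_iff.mp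
    ((resolvent_tendsto_cobounded a).eventually
      (closedBall_mem_nhds 0 (by positivity : 0 < ε / (2 * π * (K + 1)))))
  set R := max r (R₀ + 1)
  have hrR : r ≤ R := le_max_left _ _
  have hR : 0 < R := hr.trans_le hrR
  have hsph : sphere c R ⊆ resolventSet ℂ a := fun z hz =>
    hρ fun h => (mem_ball.mp h).not_ge ((mem_sphere.mp hz).symm ▸ hrR)
  have hconst : (∮ z in C(c, R), resolvent a z) = ∮ z in C(c, r), resolvent a z :=
    circleIntegral_eq_of_differentiable_on_annulus_off_countable hr hrR countable_empty
      (hcont.mono fun z hz => hρ hz.2)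
      fun z hz => (differentiableOn_resolvent a).differentiableAt
        ((isOpen_resolventSet a).mem_nhds (hρ fun h => hz.1.2 (ball_subset_closedBall h)))
  have hbound : ∀ z ∈ sphere c R, ‖resolvent a z - (z - c)⁻¹ • 1‖ ≤ ε / (2 * π * R) := by
    intro z hz
    have hzc : ‖z - c‖ = R := mem_sphere_iff_norm.mp hz
    have hzc' : z - c ≠ 0 := norm_ne_zero_iff.mp (hzc ▸ hR.ne')
    have hzR₀ : ‖resolvent a z‖ ≤ ε / (2 * π * (K + 1)) := by
      have hfar : z ∈ (closedBall c R₀)ᶜ := by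
        rw [mem_compl_iff, mem_closedBall, dist_eq_norm, hzc, not_le]
        exact (lt_add_one R₀).trans_le (le_max_right _ _)
      simpa using hR₀ hfar
    have hpt : resolvent a z - (z - c)⁻¹ • 1 =
        (z - c)⁻¹ • ((a - algebraMap ℂ A c) * resolvent a z) := by
      rw [sub_mul, mul_resolvent_self (hsph hz), Algebra.algebraMap_eq_smul_one, smul_one_mul]
      match_scalars <;> field_simp
    calc ‖resolvent a z - (z - c)⁻¹ • 1‖
        = R⁻¹ * ‖(a - algebraMap ℂ A c) * resolvent a z‖ := by rw [hpt, norm_smul, norm_inv, hzc]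
      _ ≤ R⁻¹ * (K * (ε / (2 * π * (K + 1)))) := by
        gcongr
        exact (norm_mul_le _ _).trans (by gcongr)
      _ ≤ ε / (2 * π * R) := by
        have hK : K / (K + 1) ≤ 1 := (div_le_one (by positivity)).mpr (by linarith)
        calc R⁻¹ * (K * (ε / (2 * π * (K + 1)))) = K / (K + 1) * (ε / (2 * π * R)) := by
              field_simp
          _ ≤ ε / (2 * π * R) := mul_le_of_le_one_left (by positivity) hK
  have hint₁ : CircleIntegrable (resolvent a) c R := (hcont.mono hsph).circleIntegrable hR.le
  have hint₂ : CircleIntegrable (fun z => (z - c)⁻¹ • (1 : A)) c R :=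
    (((continuousOn_id.sub continuousOn_const).inv₀ fun z hz =>
      sub_ne_zero.mpr (ne_of_mem_sphere hz hR.ne')).smul continuousOn_const).circleIntegrable hR.le
  rw [← hconst, dist_eq_norm, ← circleIntegral.integral_sub_center_inv c hR.ne',
    ← circleIntegral.integral_smul_const, ← circleIntegral.integral_sub hint₁ hint₂]
  calc _ ≤ 2 * π * R * (ε / (2 * π * R)) :=
        circleIntegral.norm_integral_le_of_norm_le_const hR.le hbound
    _ = ε := by field_simp

theorem circleIntegral_inv_sub_smul_resolvent (hr : 0 < r) (hs : spectrum ℂ a ⊆ ball c r)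
    {w : ℂ} (hw : w ∉ closedBall c r) :
    (∮ z in C(c, r), (w - z)⁻¹ • resolvent a z) = (2 * π * I : ℂ) • resolvent a w := by
  have hsph := sphere_subset_resolventSet hs
  have hwρ : w ∈ resolventSet ℂ a :=
    compl_subset_comm.mp hs fun h => hw (ball_subset_closedBall h)
  have hwz : ∀ z ∈ closedBall c r, w - z ≠ 0 := fun z hz h => hw (sub_eq_zero.mp h ▸ hz)
  have hpt : EqOn (fun z => (w - z)⁻¹ • resolvent a z)
      (fun z => (w - z)⁻¹ • resolvent a w + resolvent a z * resolvent a w) (sphere c r) := by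
    intro z hz
    dsimp only
    conv_lhs => rw [← sub_add_cancel (resolvent a z) (resolvent a w),
      resolvent_sub_resolvent_eq_smul_mul (hsph hz) hwρ, smul_add,
      inv_smul_smul₀ (hwz z (sphere_subset_closedBall hz))]
    exact add_comm _ _
  have hcont := (differentiableOn_resolvent a).continuousOn.mono hsph
  have hinv : DifferentiableOn ℂ (fun z => (w - z)⁻¹) (closedBall c r) :=
    ((differentiableOn_const w).sub differentiableOn_id).inv hwz
  have hint₁ : CircleIntegrable (fun z => (w - z)⁻¹ • resolvent a w) c r :=
    ((hinv.continuousOn.mono sphere_subset_closedBall).smul continuousOn_const).circleIntegrable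
      hr.le
  have hint₂ : CircleIntegrable (fun z => resolvent a z * resolvent a w) c r :=
    (hcont.mul continuousOn_const).circleIntegrable hr.le
  rw [circleIntegral.integral_congr hr.le hpt, circleIntegral.integral_add hint₁ hint₂,
    circleIntegral.integral_smul_const,
    (hinv.mono closure_ball_subset_closedBall).diffContOnCl.circleIntegral_eq_zero hr.le,
    zero_smul, zero_add, (hcont.circleIntegrable hr.le).integral_mul_const,
    circleIntegral_resolvent hr hs, smul_one_mul]

theorem circleIntegral_smul_resolvent_comp (hr : 0 < r) (hs : spectrum ℂ a ⊆ ball c r)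
    {c' : ℂ} {r' : ℝ} (hr' : 0 ≤ r') {ψ ζ : ℂ → ℂ} (hψ : ContinuousOn ψ (sphere c' r'))
    (hζ : ContinuousOn ζ (sphere c' r')) (hζr : MapsTo ζ (sphere c' r') (closedBall c r)ᶜ) :
    (∮ z in C(c', r'), ψ z • resolvent a (ζ z)) =
      (2 * π * I : ℂ)⁻¹ •
        ∮ w in C(c, r), (∮ z in C(c', r'), ψ z * (ζ z - w)⁻¹) • resolvent a w := by
  have hsph := sphere_subset_resolventSet hs
  have hpair : ContinuousOn (fun p : ℂ × ℂ => (ψ p.1 * (ζ p.1 - p.2)⁻¹) • resolvent a p.2)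
      (sphere c' r' ×ˢ sphere c r) := by
    refine ((hψ.comp continuousOn_fst fun p hp => hp.1).mul ?_).smul
      ((differentiableOn_resolvent a).continuousOn.comp continuousOn_snd fun p hp => hsph hp.2)
    refine ((hζ.comp continuousOn_fst fun p hp => hp.1).sub continuousOn_snd).inv₀ ?_
    rintro ⟨z, w⟩ ⟨hz, hw⟩ h
    have hζw : ζ z = w := sub_eq_zero.mp h
    exact hζr hz (by rw [hζw]; exact sphere_subset_closedBall hw)
  calc (∮ z in C(c', r'), ψ z • resolvent a (ζ z))
      = ∮ z in C(c', r'), (2 * π * I : ℂ)⁻¹ •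
          ∮ w in C(c, r), (ψ z * (ζ z - w)⁻¹) • resolvent a w := by
        refine circleIntegral.integral_congr hr' fun z hz => ?_
        rw [← inv_smul_smul₀ two_pi_I_ne_zero (resolvent a (ζ z)),
          ← circleIntegral_inv_sub_smul_resolvent hr hs (hζr hz), smul_comm (ψ z),
          ← circleIntegral.integral_smul]
        simp only [smul_smul]
    _ = (2 * π * I : ℂ)⁻¹ •
          ∮ w in C(c, r), (∮ z in C(c', r'), ψ z * (ζ z - w)⁻¹) • resolvent a w := by
        rw [circleIntegral.integral_smul, circleIntegral_circleIntegral_swap hr' hr.le hpair]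
        simp only [circleIntegral.integral_smul_const]

theorem circleIntegral_smul_resolvent_eq_of_closedBall_subset (hr : 0 < r)
    (hs : spectrum ℂ a ⊆ ball c r) {c' : ℂ} {r' : ℝ} (hsub : closedBall c r ⊆ ball c' r')
    {φ : ℂ → ℂ} (hφ : DifferentiableOn ℂ φ (closedBall c' r')) :
    (∮ z in C(c', r'), φ z • resolvent a z) = ∮ z in C(c, r), φ z • resolvent a z := by
  have hr' : 0 ≤ r' := dist_nonneg.trans (mem_ball.mp (hsub (mem_closedBall_self hr.le))).le
  calc (∮ z in C(c', r'), φ z • resolvent a z)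
      = (2 * π * I : ℂ)⁻¹ •
          ∮ w in C(c, r), (∮ z in C(c', r'), φ z * (z - w)⁻¹) • resolvent a w :=
        circleIntegral_smul_resolvent_comp (ζ := fun z => z) hr hs hr'
          (hφ.continuousOn.mono sphere_subset_closedBall) (continuousOn_id' _)
          fun z hz h => sphere_disjoint_ball.notMem_of_mem_left hz (hsub h)
    _ = (2 * π * I : ℂ)⁻¹ • ∮ w in C(c, r), (2 * π * I : ℂ) • φ w • resolvent a w := by
        congr 1
        refine circleIntegral.integral_congr hr.le fun w hw => ?_
        simp only [mul_comm (φ _), ← smul_eq_mul,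
          hφ.circleIntegral_sub_inv_smul (hsub (sphere_subset_closedBall hw)), smul_assoc]
    _ = ∮ w in C(c, r), φ w • resolvent a w := by
        rw [circleIntegral.integral_smul, inv_smul_smul₀ two_pi_I_ne_zero]

theorem circleIntegral_log_smul_resolvent_inv_eq_neg {b : A} (hab : a * b = 1) (hba : b * a = 1)
    (hr : 0 < r) (hs : spectrum ℂ a ⊆ ball c r) {c' : ℂ} {r' : ℝ}
    (hU : closedBall c' r' ⊆ {z | 0 < z.re}) (hinv : MapsTo (·⁻¹) (closedBall c r) (ball c' r')) :
    (∮ z in C(c', r'), log z • resolvent b z) = -∮ z in C(c, r), log z • resolvent a z := by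
  have hr' : 0 ≤ r' := dist_nonneg.trans (mem_ball.mp (hinv (mem_closedBall_self hr.le))).le
  have hρ : (ball c r)ᶜ ⊆ resolventSet ℂ a := compl_subset_comm.mp hs
  have hz0 : ∀ z ∈ sphere c' r', z ≠ 0 := fun z hz =>
    ne_zero_of_re_pos (hU (sphere_subset_closedBall hz))
  have hout : MapsTo (·⁻¹) (sphere c' r') (closedBall c r)ᶜ := fun z hz h =>
    sphere_disjoint_ball.notMem_of_mem_left hz (inv_inv z ▸ hinv h)
  have houtρ : ∀ z ∈ sphere c' r', z⁻¹ ∈ resolventSet ℂ a := fun z hz =>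
    hρ fun h => hout hz (ball_subset_closedBall h)
  have hζ : ContinuousOn (·⁻¹) (sphere c' r') := continuousOn_inv₀.mono hz0
  have hψ : ContinuousOn (fun z => log z * (z ^ 2)⁻¹) (sphere c' r') :=
    ((differentiableOn_log_of_re_pos hU).continuousOn.mono sphere_subset_closedBall).mul
      ((continuousOn_pow 2).inv₀ fun z hz => pow_ne_zero 2 (hz0 z hz))
  have hpt : EqOn (fun z => log z • resolvent b z)
      (fun z => (log z * z⁻¹) • (1 : A) - (log z * (z ^ 2)⁻¹) • resolvent a z⁻¹)
      (sphere c' r') := fun z hz => by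
    simp only [resolvent_eq_of_mul_eq_one hab hba (hz0 z hz) (houtρ z hz), smul_sub, smul_smul]
  have hint₁ : CircleIntegrable (fun z => (log z * z⁻¹) • (1 : A)) c' r' :=
    (((differentiableOn_log_mul_inv_of_re_pos hU).continuousOn.mono sphere_subset_closedBall).smul
      continuousOn_const).circleIntegrable hr'
  have hint₂ : CircleIntegrable (fun z => (log z * (z ^ 2)⁻¹) • resolvent a z⁻¹) c' r' :=
    (hψ.smul ((differentiableOn_resolvent a).continuousOn.comp hζ houtρ)).circleIntegrable hr'
  rw [circleIntegral.integral_congr hr' hpt, circleIntegral.integral_sub hint₁ hint₂,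
    circleIntegral.integral_smul_const, circleIntegral_log_mul_inv hr' hU, zero_smul, zero_sub,
    circleIntegral_smul_resolvent_comp hr hs hr' hψ hζ hout, neg_inj]
  calc (2 * π * I : ℂ)⁻¹ • ∮ w in C(c, r),
        (∮ z in C(c', r'), log z * (z ^ 2)⁻¹ * (z⁻¹ - w)⁻¹) • resolvent a w
      = (2 * π * I : ℂ)⁻¹ • ∮ w in C(c, r), (2 * π * I : ℂ) • log w • resolvent a w := by
        congr 1
        refine circleIntegral.integral_congr hr.le fun w hw => ?_
        rw [circleIntegral_log_mul_inv_sq_mul_inv_sub hU (hinv (sphere_subset_closedBall hw)),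
          mul_smul]
    _ = ∮ w in C(c, r), log w • resolvent a w := by
        rw [circleIntegral.integral_smul, inv_smul_smul₀ two_pi_I_ne_zero]

theorem circleIntegral_log_smul_resolvent_inv {b : A} (hab : a * b = 1) (hba : b * a = 1)
    (hr : 0 < r) (hsa : spectrum ℂ a ⊆ ball c r) (hsb : spectrum ℂ b ⊆ ball c r)
    (hU : closedBall c r ⊆ {z | 0 < z.re}) :
    (∮ z in C(c, r), log z • resolvent b z) = -∮ z in C(c, r), log z • resolvent a z := by
  have hK : IsCompact (closedBall c r ∪ (·⁻¹) '' closedBall c r) :=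
    (isCompact_closedBall c r).union ((isCompact_closedBall c r).image_of_continuousOn
      (continuousOn_inv₀.mono fun _ hz => ne_zero_of_re_pos (hU hz)))
  have hKre : ∀ z ∈ closedBall c r ∪ (·⁻¹) '' closedBall c r, 0 < z.re := by
    rintro z (hz | ⟨w, hw, rfl⟩)
    · exact hU hz
    · rw [inv_re]
      exact div_pos (hU hw) (normSq_pos.mpr (ne_zero_of_re_pos (hU hw)))
  obtain ⟨c', r', hKsub, hU'⟩ := exists_ball_superset_of_isCompact_of_re_pos hK hKre
  rw [← circleIntegral_smul_resolvent_eq_of_closedBall_subset hr hsb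
    (subset_union_left.trans hKsub) (differentiableOn_log_of_re_pos hU')]
  exact circleIntegral_log_smul_resolvent_inv_eq_neg hab hba hr hsa hU'
    fun z hz => hKsub (Or.inr (mem_image_of_mem _ hz))

end Banach

end spectrum

/-- If `T` is bounded invertible with spectrum in `ℂ \ {Re z ≤ 0}` and `B`
is a bounded operator with `B T = T⁻¹ B`, then `B (Log T) = −(Log T) B`, where `Log T`
is defined by the holomorphic functional calculus with the principal branch of log. -/
theorem stmt6 {H : Type*} [NormedAddCommGroup H] [NormedSpace ℂ H] [CompleteSpace H]
    (T Tinv LogT B : H →L[ℂ] H) (c : ℂ) (r : ℝ) (hr : 0 < r)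
    (hT : T * Tinv = 1) (hT' : Tinv * T = 1)
    (hspec : spectrum ℂ T ⊆ Metric.ball c r)
    (hspec' : spectrum ℂ Tinv ⊆ Metric.ball c r)
    (hright : Metric.closedBall c r ⊆ {z : ℂ | 0 < z.re})
    (hLog : LogT = (2 * (Real.pi : ℂ) * Complex.I)⁻¹ •
      circleIntegral (fun z : ℂ =>
        Complex.log z • Ring.inverse (z • (1 : H →L[ℂ] H) - T)) c r)
    (hBT : B * T = Tinv * B) :
    B * LogT = -(LogT * B) := by
  have hres : ∀ z : ℂ, Ring.inverse (z • (1 : H →L[ℂ] H) - T) = resolvent T z := fun z => by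
    rw [resolvent, Algebra.algebraMap_eq_smul_one]
  have hint : ∀ S : H →L[ℂ] H, spectrum ℂ S ⊆ ball c r →
      CircleIntegrable (fun z => log z • resolvent S z) c r := fun S hS =>
    ((differentiableOn_log_of_re_pos (sphere_subset_closedBall.trans hright)).continuousOn.smul
      ((spectrum.differentiableOn_resolvent S).continuousOn.mono
        (spectrum.sphere_subset_resolventSet hS))).circleIntegrable hr.le
  have hB : B * (∮ z in C(c, r), log z • resolvent T z) =
      (∮ z in C(c, r), log z • resolvent Tinv z) * B := by
    rw [← (hint T hspec).integral_const_mul, ← (hint Tinv hspec').integral_mul_const]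
    refine circleIntegral.integral_congr hr.le fun z hz => ?_
    simp only [mul_smul_comm, smul_mul_assoc,
      spectrum.mul_resolvent_eq_resolvent_mul hBT (spectrum.sphere_subset_resolventSet hspec hz)
        (spectrum.sphere_subset_resolventSet hspec' hz)]
  simp only [hres] at hLog
  rw [hLog, mul_smul_comm, hB,
    spectrum.circleIntegral_log_smul_resolvent_inv hT hT' hr hspec hspec' hright, neg_mul,
    smul_neg, smul_mul_assoc]
end

section
/- On the unit disk (radius ε) with euclidean metric, trivial line bundle, trivial metric and framing, the boundary (Dirichlet-to-Neumann type) operator 𝒜_{B_ε} for the Alvarez boundary value problem acts on Fourier modes by 𝒜_{B_ε}(f,g)(θ) = Σ_{n≠0} M_n (f̂(n), ĝ(n))ᵀ e^{inθ}, where M_n is the 2×2 matrix with entries M_n = [[0, −i σ(n)], [i σ(n), −ε/|n|]] and σ(n) is the sign of n. -/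
/-!
Write `φ = F + conj G` and `z = ε e^{iθ}`. Along the circle the radial and angular derivatives
combine so that the Neumann-type data see only `G`: `g = -(2/ε) Re (z G')` and
`f' = -(2/ε) Im (z G')`, while `f = Im (F - G)` and `g' = Re (F + G)`. By Cauchy's theorem the
boundary values of a holomorphic `H` have no negative Fourier modes, so for `n > 0` the `n`-th
coefficients of `Re H` and `Im H` are `Ĥ n / 2` and `Ĥ n / 2i`, and integration by parts gives
`(z H')^ n = n Ĥ n`. Eliminating `F̂ n` and `Ĝ n` gives the two relations for `n > 0`; the modes
`n < 0` follow by conjugation, the four data being real.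
-/

open Complex Real MeasureTheory Metric Set Filter Topology ComplexConjugate

theorem HasDerivAt.re {w : ℝ → ℂ} {w' : ℂ} {x : ℝ} (h : HasDerivAt w w' x) :
    HasDerivAt (fun x => (w x).re) w'.re x :=
  reCLM.hasFDerivAt.comp_hasDerivAt x h

theorem HasDerivAt.im {w : ℝ → ℂ} {w' : ℂ} {x : ℝ} (h : HasDerivAt w w' x) :
    HasDerivAt (fun x => (w x).im) w'.im x :=
  imCLM.hasFDerivAt.comp_hasDerivAt x h

theorem hasDerivAt_circleMap_radius (c : ℂ) (R θ : ℝ) :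
    HasDerivAt (fun r : ℝ => circleMap c r θ) (exp (θ * I)) R := by
  simpa [circleMap] using ((hasDerivAt_id R).ofReal_comp.mul_const (exp (θ * I))).const_add c

theorem circleMap_mem_ball_zero {R R' : ℝ} (hR : 0 ≤ R) (hRR' : R < R') (θ : ℝ) :
    circleMap 0 R θ ∈ ball 0 R' := by
  rwa [mem_ball_zero_iff, norm_circleMap_zero, abs_of_nonneg hR]

theorem DiffContOnCl.continuous_comp_circleMap {R : ℝ} (hR : 0 ≤ R) {H : ℂ → ℂ}
    (hH : DiffContOnCl ℂ H (ball 0 R)) : Continuous (H ∘ circleMap 0 R) :=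
  hH.continuousOn_ball.comp_continuous (continuous_circleMap 0 R)
    fun θ => sphere_subset_closedBall (circleMap_mem_sphere 0 hR θ)

theorem hasDerivAt_add_conj_comp {φ F G : ℂ → ℂ} {γ : ℝ → ℂ} {γ' : ℂ} {t : ℝ}
    (hγ : HasDerivAt γ γ' t) (hF : DifferentiableAt ℂ F (γ t)) (hG : DifferentiableAt ℂ G (γ t))
    (hφ : ∀ᶠ z in 𝓝 (γ t), φ z = F z + conj (G z)) :
    HasDerivAt (fun s => φ (γ s)) (deriv F (γ t) * γ' + conj (deriv G (γ t) * γ')) t :=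
  ((hF.hasDerivAt.comp t hγ).add (hG.hasDerivAt.comp t hγ).star).congr_of_eventuallyEq
    (hγ.continuousAt.eventually hφ)

theorem fourierCoeffOn_two_pi_eq_integral (w : ℝ → ℂ) (n : ℤ) :
    fourierCoeffOn two_pi_pos w n =
      1 / (2 * (π : ℂ)) * ∫ θ in (0 : ℝ)..2 * π, w θ * exp (-(n : ℂ) * θ * I) := by
  rw [fourierCoeffOn_eq_integral, sub_zero, real_smul]
  push_cast
  congr 1
  refine intervalIntegral.integral_congr fun θ _ => ?_
  rw [fourier_coe_apply, smul_eq_mul, mul_comm]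
  congr 2
  push_cast
  field_simp

theorem continuous_fourier_coe (T : ℝ) (n : ℤ) :
    Continuous fun x : ℝ => fourier n (x : AddCircle T) :=
  (map_continuous (fourier n)).comp (AddCircle.continuous_mk' T)

section FourierCoeffOn

variable {a b : ℝ} (hab : a < b)

theorem fourierCoeffOn_add {v w : ℝ → ℂ} (hv : IntervalIntegrable v volume a b)
    (hw : IntervalIntegrable w volume a b) (n : ℤ) :
    fourierCoeffOn hab (fun x => v x + w x) n =
      fourierCoeffOn hab v n + fourierCoeffOn hab w n := by
  have hF := (continuous_fourier_coe (b - a) (-n)).continuousOn (s := uIcc a b)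
  simp only [fourierCoeffOn_eq_integral, smul_eq_mul, mul_add]
  rw [intervalIntegral.integral_add (hv.continuousOn_mul hF) (hw.continuousOn_mul hF), smul_add]

theorem fourierCoeffOn_sub {v w : ℝ → ℂ} (hv : IntervalIntegrable v volume a b)
    (hw : IntervalIntegrable w volume a b) (n : ℤ) :
    fourierCoeffOn hab (fun x => v x - w x) n =
      fourierCoeffOn hab v n - fourierCoeffOn hab w n := by
  have hF := (continuous_fourier_coe (b - a) (-n)).continuousOn (s := uIcc a b)
  simp only [fourierCoeffOn_eq_integral, smul_eq_mul, mul_sub]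
  rw [intervalIntegral.integral_sub (hv.continuousOn_mul hF) (hw.continuousOn_mul hF), smul_sub]

theorem fourierCoeffOn_conj (w : ℝ → ℂ) (n : ℤ) :
    fourierCoeffOn hab (fun x => conj (w x)) n = conj (fourierCoeffOn hab w (-n)) := by
  simp only [fourierCoeffOn_eq_integral, real_smul, smul_eq_mul, map_mul, conj_ofReal,
    ← intervalIntegral.intervalIntegral_conj, fourier_neg, neg_neg]

theorem fourierCoeffOn_ofReal_neg (w : ℝ → ℝ) (n : ℤ) :
    fourierCoeffOn hab (fun x => (w x : ℂ)) (-n) =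
      conj (fourierCoeffOn hab (fun x => (w x : ℂ)) n) := by
  simpa only [conj_ofReal, neg_neg] using fourierCoeffOn_conj hab (fun x => (w x : ℂ)) (-n)

variable {w : ℝ → ℂ} (hw : IntervalIntegrable w volume a b)
include hw

theorem IntervalIntegrable.conj : IntervalIntegrable (fun x => conj (w x)) volume a b :=
  ⟨conjCLE.toContinuousLinearMap.integrable_comp hw.1,
    conjCLE.toContinuousLinearMap.integrable_comp hw.2⟩

theorem fourierCoeffOn_re (n : ℤ) :
    fourierCoeffOn hab (fun x => ((w x).re : ℂ)) n =
      (fourierCoeffOn hab w n + conj (fourierCoeffOn hab w (-n))) / 2 := by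
  have hre : (fun x => ((w x).re : ℂ)) = fun x => 2⁻¹ * (w x + conj (w x)) := by
    ext x; rw [add_conj]; push_cast; ring
  rw [hre, fourierCoeffOn.const_mul, fourierCoeffOn_add hab hw hw.conj, fourierCoeffOn_conj]
  ring

theorem fourierCoeffOn_im (n : ℤ) :
    fourierCoeffOn hab (fun x => ((w x).im : ℂ)) n =
      (fourierCoeffOn hab w n - conj (fourierCoeffOn hab w (-n))) / (2 * I) := by
  have him : (fun x => ((w x).im : ℂ)) = fun x => (2 * I)⁻¹ * (w x - conj (w x)) := by
    ext x; rw [sub_conj]; push_cast; field_simp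
  rw [him, fourierCoeffOn.const_mul, fourierCoeffOn_sub hab hw hw.conj, fourierCoeffOn_conj]
  ring

end FourierCoeffOn

section BoundaryValues

variable {R : ℝ} {H : ℂ → ℂ}

theorem fourierCoeffOn_comp_circleMap_eq_zero_of_neg (hR : 0 < R)
    (hH : DiffContOnCl ℂ H (ball 0 R)) {n : ℤ} (hn : n < 0) :
    fourierCoeffOn two_pi_pos (H ∘ circleMap 0 R) n = 0 := by
  -- with `n = -(k + 1)`, the coefficient is a nonzero multiple of `∮ z ^ k • H z`
  obtain ⟨k, rfl⟩ : ∃ k : ℕ, n = -(k + 1) := ⟨(-n - 1).toNat, by omega⟩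
  have hcauchy : (∮ z in C(0, R), z ^ k • H z) = 0 :=
    ((differentiable_pow k).diffContOnCl.smul hH).circleIntegral_eq_zero hR.le
  have hintegrand : ∀ θ : ℝ,
      deriv (circleMap 0 R) θ • (circleMap 0 R θ ^ k • H (circleMap 0 R θ)) =
        I * (R : ℂ) ^ (k + 1) *
          ((H ∘ circleMap 0 R) θ * exp (-((-(k + 1) : ℤ) : ℂ) * θ * I)) := fun θ => by
    simp only [deriv_circleMap, circleMap_zero, smul_eq_mul, Function.comp_apply, mul_pow,
      ← Complex.exp_nat_mul]
    push_cast
    rw [show -(-((k : ℂ) + 1)) * θ * I = k * (θ * I) + θ * I by ring, Complex.exp_add]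
    ring
  rw [circleIntegral, intervalIntegral.integral_congr fun θ _ => hintegrand θ,
    intervalIntegral.integral_const_mul] at hcauchy
  rw [fourierCoeffOn_two_pi_eq_integral,
    (mul_eq_zero.mp hcauchy).resolve_left (by simp [hR.ne']), mul_zero]

theorem fourierCoeffOn_comp_circleMap_mul_deriv (hR : 0 ≤ R)
    (hH : AnalyticOnNhd ℂ H (sphere 0 R)) {n : ℤ} (hn : n ≠ 0) :
    fourierCoeffOn two_pi_pos ((fun z => z * deriv H z) ∘ circleMap 0 R) n =
      n * fourierCoeffOn two_pi_pos (H ∘ circleMap 0 R) n := by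
  have hmem := circleMap_mem_sphere 0 hR
  have hderiv : ∀ θ : ℝ, HasDerivAt (H ∘ circleMap 0 R)
      (I * ((fun z => z * deriv H z) ∘ circleMap 0 R) θ) θ := fun θ => by
    refine ((hH _ (hmem θ)).differentiableAt.hasDerivAt.comp θ
      (hasDerivAt_circleMap 0 R θ)).congr_deriv ?_
    simp only [Function.comp_apply]
    ring
  have hcont : Continuous ((fun z => z * deriv H z) ∘ circleMap 0 R) :=
    (continuousOn_id.mul hH.deriv.continuousOn).comp_continuous (continuous_circleMap 0 R) hmem
  have hparts := fourierCoeffOn_of_hasDerivAt two_pi_pos hn (fun θ _ => hderiv θ)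
    ((continuous_const.mul hcont).intervalIntegrable _ _)
  rw [((periodic_circleMap 0 R).comp H).eq, sub_self, mul_zero, zero_sub,
    fourierCoeffOn.const_mul] at hparts
  have hn' : (n : ℂ) ≠ 0 := by exact_mod_cast hn
  rw [hparts]
  field_simp
  push_cast
  ring

theorem fourierCoeffOn_re_comp_circleMap_of_pos (hR : 0 < R)
    (hH : DiffContOnCl ℂ H (ball 0 R)) {n : ℤ} (hn : 0 < n) :
    fourierCoeffOn two_pi_pos (fun θ => ((H (circleMap 0 R θ)).re : ℂ)) n =
      fourierCoeffOn two_pi_pos (H ∘ circleMap 0 R) n / 2 := by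
  refine (fourierCoeffOn_re two_pi_pos
    ((hH.continuous_comp_circleMap hR.le).intervalIntegrable _ _) n).trans ?_
  rw [fourierCoeffOn_comp_circleMap_eq_zero_of_neg hR hH (neg_lt_zero.2 hn), map_zero, add_zero]

theorem fourierCoeffOn_im_comp_circleMap_of_pos (hR : 0 < R)
    (hH : DiffContOnCl ℂ H (ball 0 R)) {n : ℤ} (hn : 0 < n) :
    fourierCoeffOn two_pi_pos (fun θ => ((H (circleMap 0 R θ)).im : ℂ)) n =
      fourierCoeffOn two_pi_pos (H ∘ circleMap 0 R) n / (2 * I) := by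
  refine (fourierCoeffOn_im two_pi_pos
    ((hH.continuous_comp_circleMap hR.le).intervalIntegrable _ _) n).trans ?_
  rw [fourierCoeffOn_comp_circleMap_eq_zero_of_neg hR hH (neg_lt_zero.2 hn), map_zero, sub_zero]

end BoundaryValues

section HarmonicBoundaryData

variable {ε ε' : ℝ} {φ F G : ℂ → ℂ} (hε : 0 < ε) (hεε' : ε < ε')
  (hF : AnalyticOnNhd ℂ F (ball 0 ε')) (hG : AnalyticOnNhd ℂ G (ball 0 ε'))
  (hφ : ∀ z ∈ ball (0 : ℂ) ε', φ z = F z + conj (G z))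
include hε hεε' hF hG hφ

theorem hasDerivAt_radial_add_conj (θ : ℝ) :
    HasDerivAt (fun r : ℝ => φ (circleMap 0 r θ))
      (deriv F (circleMap 0 ε θ) * exp (θ * I)
        + conj (deriv G (circleMap 0 ε θ) * exp (θ * I))) ε := by
  have hz := circleMap_mem_ball_zero hε.le hεε' θ
  exact hasDerivAt_add_conj_comp (hasDerivAt_circleMap_radius 0 ε θ)
    (hF _ hz).differentiableAt (hG _ hz).differentiableAt
    (eventually_of_mem (isOpen_ball.mem_nhds hz) hφ)

theorem hasDerivAt_angular_add_conj (θ : ℝ) :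
    HasDerivAt (fun t : ℝ => φ (circleMap 0 ε t))
      (deriv F (circleMap 0 ε θ) * (circleMap 0 ε θ * I)
        + conj (deriv G (circleMap 0 ε θ) * (circleMap 0 ε θ * I))) θ := by
  have hz := circleMap_mem_ball_zero hε.le hεε' θ
  exact hasDerivAt_add_conj_comp (hasDerivAt_circleMap 0 ε θ)
    (hF _ hz).differentiableAt (hG _ hz).differentiableAt
    (eventually_of_mem (isOpen_ball.mem_nhds hz) hφ)

theorem neg_deriv_radial_re_add_deriv_angular_im (θ : ℝ) :
    -deriv (fun r : ℝ => (φ (circleMap 0 r θ)).re) ε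
      + 1 / ε * deriv (fun t : ℝ => (φ (circleMap 0 ε t)).im) θ
      = -(2 / ε) * (circleMap 0 ε θ * deriv G (circleMap 0 ε θ)).re := by
  rw [(hasDerivAt_radial_add_conj hε hεε' hF hG hφ θ).re.deriv,
    (hasDerivAt_angular_add_conj hε hεε' hF hG hφ θ).im.deriv, circleMap_zero]
  simp only [add_re, add_im, mul_re, mul_im, conj_re, conj_im, ofReal_re, ofReal_im, I_re, I_im]
  field_simp
  ring

theorem deriv_radial_im_add_deriv_angular_re (θ : ℝ) :
    deriv (fun r : ℝ => (φ (circleMap 0 r θ)).im) ε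
      + 1 / ε * deriv (fun t : ℝ => (φ (circleMap 0 ε t)).re) θ
      = -(2 / ε) * (circleMap 0 ε θ * deriv G (circleMap 0 ε θ)).im := by
  rw [(hasDerivAt_radial_add_conj hε hεε' hF hG hφ θ).im.deriv,
    (hasDerivAt_angular_add_conj hε hεε' hF hG hφ θ).re.deriv, circleMap_zero]
  simp only [add_re, add_im, mul_re, mul_im, conj_re, conj_im, ofReal_re, ofReal_im, I_re, I_im]
  field_simp
  ring

end HarmonicBoundaryData

theorem fourierCoeffOn_alvarez_of_pos {ε ε' : ℝ} {F G : ℂ → ℂ} (hε : 0 < ε) (hεε' : ε < ε')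
    (hF : AnalyticOnNhd ℂ F (ball 0 ε')) (hG : AnalyticOnNhd ℂ G (ball 0 ε'))
    {f g f' g' : ℝ → ℝ}
    (hf : ∀ θ, f θ = (F (circleMap 0 ε θ) - G (circleMap 0 ε θ)).im)
    (hg : ∀ θ, g θ = -(2 / ε) * (circleMap 0 ε θ * deriv G (circleMap 0 ε θ)).re)
    (hf' : ∀ θ, f' θ = -(2 / ε) * (circleMap 0 ε θ * deriv G (circleMap 0 ε θ)).im)
    (hg' : ∀ θ, g' θ = (F (circleMap 0 ε θ) + G (circleMap 0 ε θ)).re) {n : ℤ} (hn : 0 < n) :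
    fourierCoeffOn two_pi_pos (fun θ => (f' θ : ℂ)) n =
        -I * fourierCoeffOn two_pi_pos (fun θ => (g θ : ℂ)) n ∧
      fourierCoeffOn two_pi_pos (fun θ => (g' θ : ℂ)) n =
        I * fourierCoeffOn two_pi_pos (fun θ => (f θ : ℂ)) n
          - ε / n * fourierCoeffOn two_pi_pos (fun θ => (g θ : ℂ)) n := by
  have hsub := closedBall_subset_ball (x := (0 : ℂ)) hεε'
  have hFc := hF.differentiableOn.diffContOnCl_ball hsub
  have hGc := hG.differentiableOn.diffContOnCl_ball hsub
  have hDG : DiffContOnCl ℂ (fun z => z * deriv G z) (ball 0 ε) :=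
    (differentiableOn_id.mul hG.deriv.differentiableOn).diffContOnCl_ball hsub
  have hFi : IntervalIntegrable (F ∘ circleMap 0 ε) volume 0 (2 * π) :=
    (hFc.continuous_comp_circleMap hε.le).intervalIntegrable _ _
  have hGi : IntervalIntegrable (G ∘ circleMap 0 ε) volume 0 (2 * π) :=
    (hGc.continuous_comp_circleMap hε.le).intervalIntegrable _ _
  have hmul := fourierCoeffOn_comp_circleMap_mul_deriv hε.le
    (hG.mono (sphere_subset_closedBall.trans hsub)) hn.ne'
  have hfc : fourierCoeffOn two_pi_pos (fun θ => (f θ : ℂ)) n =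
      (fourierCoeffOn two_pi_pos (F ∘ circleMap 0 ε) n
        - fourierCoeffOn two_pi_pos (G ∘ circleMap 0 ε) n) / (2 * I) := by
    simp only [hf]
    exact (fourierCoeffOn_im_comp_circleMap_of_pos hε (hFc.sub hGc) hn).trans
      (congrArg (· / (2 * I)) (fourierCoeffOn_sub two_pi_pos hFi hGi n))
  have hgc : fourierCoeffOn two_pi_pos (fun θ => (g θ : ℂ)) n =
      -(2 / ε) * (n * fourierCoeffOn two_pi_pos (G ∘ circleMap 0 ε) n) / 2 := by
    simp only [hg, ofReal_mul]
    rw [fourierCoeffOn.const_mul, fourierCoeffOn_re_comp_circleMap_of_pos hε hDG hn, hmul]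
    push_cast; ring
  have hf'c : fourierCoeffOn two_pi_pos (fun θ => (f' θ : ℂ)) n =
      -(2 / ε) * (n * fourierCoeffOn two_pi_pos (G ∘ circleMap 0 ε) n) / (2 * I) := by
    simp only [hf', ofReal_mul]
    rw [fourierCoeffOn.const_mul, fourierCoeffOn_im_comp_circleMap_of_pos hε hDG hn, hmul]
    push_cast; ring
  have hg'c : fourierCoeffOn two_pi_pos (fun θ => (g' θ : ℂ)) n =
      (fourierCoeffOn two_pi_pos (F ∘ circleMap 0 ε) n
        + fourierCoeffOn two_pi_pos (G ∘ circleMap 0 ε) n) / 2 := by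
    simp only [hg']
    exact (fourierCoeffOn_re_comp_circleMap_of_pos hε (hFc.add hGc) hn).trans
      (congrArg (· / 2) (fourierCoeffOn_add two_pi_pos hFi hGi n))
  have hε' : (ε : ℂ) ≠ 0 := by exact_mod_cast hε.ne'
  have hn' : (n : ℂ) ≠ 0 := by exact_mod_cast hn.ne'
  rw [hfc, hgc, hf'c, hg'c]
  constructor
  · field_simp
    rw [I_sq]
    ring
  · field_simp
    ring

theorem alvarez_modes_of_pos {ε : ℝ} {fh gh fh' gh' : ℤ → ℂ}
    (hfh : ∀ n, fh (-n) = conj (fh n)) (hgh : ∀ n, gh (-n) = conj (gh n))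
    (hfh' : ∀ n, fh' (-n) = conj (fh' n)) (hgh' : ∀ n, gh' (-n) = conj (gh' n))
    (hpos : ∀ n : ℤ, 0 < n → fh' n = -I * gh n ∧ gh' n = I * fh n - ε / n * gh n)
    {n : ℤ} (hn : n ≠ 0) :
    fh' n = -I * (if 0 < n then 1 else -1) * gh n ∧
      gh' n = I * (if 0 < n then 1 else -1) * fh n
        - ((ε / (n.natAbs : ℝ) : ℝ) : ℂ) * gh n := by
  rcases hn.lt_or_gt with hneg | hpos'
  · obtain ⟨h1, h2⟩ := hpos (-n) (by omega)
    simp only [hfh, hgh, hfh', hgh'] at h1 h2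
    have habs : (n.natAbs : ℂ) = -n := by
      rw [← Int.cast_natCast, show (n.natAbs : ℤ) = -n by omega, Int.cast_neg]
    apply_fun conj at h1 h2
    simp only [map_mul, map_sub, map_neg, map_div₀, conj_conj, conj_I, conj_ofReal, map_intCast]
      at h1 h2
    simp only [if_neg (not_lt.2 hneg.le)]
    push_cast
    rw [habs]
    constructor
    · rw [h1]; ring
    · rw [h2]; push_cast; ring
  · obtain ⟨h1, h2⟩ := hpos n hpos'
    have habs : (n.natAbs : ℂ) = n := by
      rw [← Int.cast_natCast, show (n.natAbs : ℤ) = n by omega]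
    simp only [if_pos hpos']
    push_cast
    rw [habs, h1, h2]
    constructor <;> ring

/-- On the disk `B_ε` with euclidean metric, trivial line bundle, metric and
framing, the Alvarez boundary operator `𝒜_{B_ε}` acts on Fourier modes by
`𝒜(f,g)^(n) = [[0, −iσ(n)], [iσ(n), −ε/|n|]] (f̂(n), ĝ(n))ᵀ` for `n ≠ 0`, where `σ(n)` is
the sign of `n`.  Concretely: for any harmonic function `φ = u + iv` on a disk of radius
`ε' > ε` (i.e. `φ = F + conj G` with `F`, `G` analytic), the imaginary Alvarez boundary data
`f = v|_{r=ε}`, `g = (−∂_r u + ε⁻¹ ∂_θ v)|_{r=ε}` and the image data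
`f' = (∂_r v + ε⁻¹ ∂_θ u)|_{r=ε}`, `g' = u|_{r=ε}` (the components of `J b'(Φ)`) have
Fourier coefficients satisfying the stated matrix relation. -/
theorem stmt11 (ε ε' : ℝ) (hε : 0 < ε) (hεε' : ε < ε')
    (φ F G : ℂ → ℂ)
    (hF : AnalyticOnNhd ℂ F (Metric.ball 0 ε'))
    (hG : AnalyticOnNhd ℂ G (Metric.ball 0 ε'))
    (hφ : ∀ z ∈ Metric.ball (0 : ℂ) ε', φ z = F z + (starRingEnd ℂ) (G z))
    (f g f' g' : ℝ → ℝ)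
    (hf : ∀ θ : ℝ, f θ = (φ ((ε : ℂ) * Complex.exp ((θ : ℂ) * Complex.I))).im)
    (hg : ∀ θ : ℝ, g θ =
      -(deriv (fun r : ℝ => (φ ((r : ℂ) * Complex.exp ((θ : ℂ) * Complex.I))).re) ε)
      + (1 / ε) * deriv (fun t : ℝ => (φ ((ε : ℂ) * Complex.exp ((t : ℂ) * Complex.I))).im) θ)
    (hf' : ∀ θ : ℝ, f' θ =
      deriv (fun r : ℝ => (φ ((r : ℂ) * Complex.exp ((θ : ℂ) * Complex.I))).im) ε
      + (1 / ε) * deriv (fun t : ℝ => (φ ((ε : ℂ) * Complex.exp ((t : ℂ) * Complex.I))).re) θ)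
    (hg' : ∀ θ : ℝ, g' θ = (φ ((ε : ℂ) * Complex.exp ((θ : ℂ) * Complex.I))).re)
    (fh gh fh' gh' : ℤ → ℂ)
    (hfh : ∀ n : ℤ, fh n = (1 / (2 * (Real.pi : ℂ))) *
      ∫ θ in (0:ℝ)..(2 * Real.pi), (f θ : ℂ) * Complex.exp (-(n : ℂ) * (θ : ℂ) * Complex.I))
    (hgh : ∀ n : ℤ, gh n = (1 / (2 * (Real.pi : ℂ))) *
      ∫ θ in (0:ℝ)..(2 * Real.pi), (g θ : ℂ) * Complex.exp (-(n : ℂ) * (θ : ℂ) * Complex.I))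
    (hfh' : ∀ n : ℤ, fh' n = (1 / (2 * (Real.pi : ℂ))) *
      ∫ θ in (0:ℝ)..(2 * Real.pi), (f' θ : ℂ) * Complex.exp (-(n : ℂ) * (θ : ℂ) * Complex.I))
    (hgh' : ∀ n : ℤ, gh' n = (1 / (2 * (Real.pi : ℂ))) *
      ∫ θ in (0:ℝ)..(2 * Real.pi), (g' θ : ℂ) * Complex.exp (-(n : ℂ) * (θ : ℂ) * Complex.I)) :
    ∀ n : ℤ, n ≠ 0 →
      fh' n = -Complex.I * (if 0 < n then 1 else -1) * gh n ∧
      gh' n = Complex.I * (if 0 < n then 1 else -1) * fh n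
        - ((ε / (n.natAbs : ℝ) : ℝ) : ℂ) * gh n := by
  simp only [← circleMap_zero] at hf hg hf' hg'
  have hfh₀ : fh = fourierCoeffOn two_pi_pos (fun θ => (f θ : ℂ)) :=
    funext fun n => (hfh n).trans (fourierCoeffOn_two_pi_eq_integral _ n).symm
  have hgh₀ : gh = fourierCoeffOn two_pi_pos (fun θ => (g θ : ℂ)) :=
    funext fun n => (hgh n).trans (fourierCoeffOn_two_pi_eq_integral _ n).symm
  have hfh'₀ : fh' = fourierCoeffOn two_pi_pos (fun θ => (f' θ : ℂ)) :=
    funext fun n => (hfh' n).trans (fourierCoeffOn_two_pi_eq_integral _ n).symm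
  have hgh'₀ : gh' = fourierCoeffOn two_pi_pos (fun θ => (g' θ : ℂ)) :=
    funext fun n => (hgh' n).trans (fourierCoeffOn_two_pi_eq_integral _ n).symm
  subst hfh₀ hgh₀ hfh'₀ hgh'₀
  have hmem := circleMap_mem_ball_zero hε.le hεε'
  intro n hn
  refine alvarez_modes_of_pos (fourierCoeffOn_ofReal_neg _ _) (fourierCoeffOn_ofReal_neg _ _)
    (fourierCoeffOn_ofReal_neg _ _) (fourierCoeffOn_ofReal_neg _ _) (fun m hm => ?_) hn
  refine fourierCoeffOn_alvarez_of_pos hε hεε' hF hG (fun θ => ?_) (fun θ => ?_) (fun θ => ?_)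
    (fun θ => ?_) hm
  · rw [hf, hφ _ (hmem θ), add_im, sub_im, conj_im, sub_eq_add_neg]
  · rw [hg, neg_deriv_radial_re_add_deriv_angular_im hε hεε' hF hG hφ]
  · rw [hf', deriv_radial_im_add_deriv_angular_re hε hεε' hF hG hφ]
  · rw [hg', hφ _ (hmem θ), add_re, add_re, conj_re]
end
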